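/- If ε ~ N(0, σ²) and S clips to [L, U] with L ≤ θ ≤ U, then E|S(θ + ε) − θ| = (U − θ)(1 − F(U − θ)) + (θ − L)F(L − θ) + σ²(2f(0) − f(U − θ) − f(L − θ)), where F and f are the CDF and density of N(0, σ²). -/

import Mathlib

/-!
After shifting by `θ`, the error is `ε` clipped to `[L - θ, U - θ]`, an interval containing `0`.
Splitting the line at `L - θ`, `0` and `U - θ`, the error is constant on the two outer pieces,
which gives the CDF terms, and equals `∓x` on the two inner ones, which are integrated with the
primitive `-σ² f` of `x f(x)`.
-/

open MeasureTheory Real Set ProbabilityTheory NNReal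

section ClippedFirstAbsoluteMoment

variable {f G : ℝ → ℝ} {a b : ℝ}

lemma abs_max_min_le (a b x : ℝ) : |max a (min b x)| ≤ max |a| |b| :=
  abs_le.2 ⟨by linarith [neg_abs_le a, le_max_left |a| |b|, le_max_left a (min b x)],
    max_le ((le_abs_self a).trans (le_max_left _ _))
      ((min_le_left b x).trans ((le_abs_self b).trans (le_max_right _ _)))⟩

lemma integrable_abs_max_min_mul (hf : Integrable f) :
    Integrable (fun x => |max a (min b x)| * f x) :=
  hf.bdd_mul (c := max |a| |b|)
    (by fun_prop : Continuous fun x => |max a (min b x)|).aestronglyMeasurable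
    (ae_of_all _ fun x => by simpa only [Real.norm_eq_abs, abs_abs] using abs_max_min_le a b x)

lemma setIntegral_Ioc_id_mul (hf : Integrable f) (hG : ∀ x, HasDerivAt G (x * f x) x) {p q : ℝ}
    (hpq : p ≤ q) : ∫ x in Ioc p q, x * f x = G q - G p := by
  rw [← intervalIntegral.integral_of_le hpq]
  exact intervalIntegral.integral_eq_sub_of_hasDerivAt (fun x _ => hG x)
    (hf.intervalIntegrable.continuousOn_mul continuousOn_id)

lemma setIntegral_Iic_zero_abs_max_min_mul (hf : Integrable f)
    (hG : ∀ x, HasDerivAt G (x * f x) x) (ha : a ≤ 0) (hb : 0 ≤ b) :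
    ∫ x in Iic 0, |max a (min b x)| * f x = G a - G 0 - a * ∫ x in Iic a, f x := by
  have hi := (integrable_abs_max_min_mul (a := a) (b := b) hf).integrableOn (s := Iic 0)
  rw [← Iic_union_Ioc_eq_Iic ha, setIntegral_union (Iic_disjoint_Ioc le_rfl) measurableSet_Ioc
    (hi.mono_set (Iic_subset_Iic.2 ha)) (hi.mono_set Ioc_subset_Iic_self)]
  have h_tail : ∫ x in Iic a, |max a (min b x)| * f x = -a * ∫ x in Iic a, f x := by
    rw [← integral_const_mul]
    refine setIntegral_congr_fun measurableSet_Iic fun x (hx : x ≤ a) => ?_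
    rw [min_eq_right (hx.trans (ha.trans hb)), max_eq_left hx, abs_of_nonpos ha]
  have h_body : ∫ x in Ioc a 0, |max a (min b x)| * f x = G a - G 0 := by
    rw [setIntegral_congr_fun measurableSet_Ioc (g := fun x => -(x * f x)), integral_neg,
      setIntegral_Ioc_id_mul hf hG ha, neg_sub]
    rintro x ⟨hax, hx0⟩
    dsimp only
    rw [min_eq_right (hx0.trans hb), max_eq_right hax.le, abs_of_nonpos hx0, neg_mul]
  rw [h_tail, h_body]
  ring

lemma setIntegral_Ioi_zero_abs_max_min_mul (hf : Integrable f)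
    (hG : ∀ x, HasDerivAt G (x * f x) x) (ha : a ≤ 0) (hb : 0 ≤ b) :
    ∫ x in Ioi 0, |max a (min b x)| * f x = G b - G 0 + b * ∫ x in Ioi b, f x := by
  have hi := (integrable_abs_max_min_mul (a := a) (b := b) hf).integrableOn (s := Ioi 0)
  rw [← Ioc_union_Ioi_eq_Ioi hb, setIntegral_union (Ioc_disjoint_Ioi le_rfl) measurableSet_Ioi
    (hi.mono_set Ioc_subset_Ioi_self) (hi.mono_set (Ioi_subset_Ioi hb))]
  have h_body : ∫ x in Ioc 0 b, |max a (min b x)| * f x = G b - G 0 := by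
    rw [setIntegral_congr_fun measurableSet_Ioc (g := fun x => x * f x),
      setIntegral_Ioc_id_mul hf hG hb]
    rintro x ⟨hx0, hxb⟩
    dsimp only
    rw [min_eq_right hxb, max_eq_right (ha.trans hx0.le), abs_of_pos hx0]
  have h_tail : ∫ x in Ioi b, |max a (min b x)| * f x = b * ∫ x in Ioi b, f x := by
    rw [← integral_const_mul]
    refine setIntegral_congr_fun measurableSet_Ioi fun x (hx : b < x) => ?_
    rw [min_eq_left hx.le, max_eq_right (ha.trans hb), abs_of_nonneg hb]
  rw [h_body, h_tail]

theorem integral_abs_max_min_mul (hf : Integrable f) (hG : ∀ x, HasDerivAt G (x * f x) x)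
    (ha : a ≤ 0) (hb : 0 ≤ b) :
    ∫ x, |max a (min b x)| * f x =
      G a + G b - 2 * G 0 - a * (∫ x in Iic a, f x) + b * ∫ x in Ioi b, f x := by
  have hi := integrable_abs_max_min_mul (a := a) (b := b) hf
  rw [← intervalIntegral.integral_Iic_add_Ioi hi.integrableOn hi.integrableOn,
    setIntegral_Iic_zero_abs_max_min_mul hf hG ha hb,
    setIntegral_Ioi_zero_abs_max_min_mul hf hG ha hb]
  ring

end ClippedFirstAbsoluteMoment

lemma hasDerivAt_gaussianPDFReal (μ : ℝ) (v : ℝ≥0) (x : ℝ) :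
    HasDerivAt (gaussianPDFReal μ v) (-((x - μ) / v) * gaussianPDFReal μ v x) x := by
  have h_exponent : HasDerivAt (fun y => -(y - μ) ^ 2 / (2 * v)) (-((x - μ) / v)) x := by
    have := (((hasDerivAt_id x).sub_const μ).pow 2).neg.div_const (2 * (v : ℝ))
    refine this.congr_deriv ?_
    simp only [id, Nat.cast_ofNat, mul_one]
    ring
  refine (h_exponent.exp.const_mul (√(2 * π * v))⁻¹).congr_deriv ?_
  rw [gaussianPDFReal]
  ring

lemma hasDerivAt_neg_mul_gaussianPDFReal (μ : ℝ) (v : ℝ≥0) (x : ℝ) :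
    HasDerivAt (fun y => -(v : ℝ) * gaussianPDFReal μ v y)
      ((x - μ) * gaussianPDFReal μ v x) x := by
  refine ((hasDerivAt_gaussianPDFReal μ v x).const_mul (-(v : ℝ))).congr_deriv ?_
  rcases eq_or_ne v 0 with rfl | hv
  · simp
  · field_simp

lemma gaussianPDFReal_zero_toNNReal_sq {σ : ℝ} (hσ : 0 ≤ σ) (x : ℝ) :
    gaussianPDFReal 0 (σ ^ 2).toNNReal x =
      1 / (σ * √(2 * π)) * exp (-(x ^ 2) / (2 * σ ^ 2)) := by
  rw [gaussianPDFReal, Real.coe_toNNReal _ (sq_nonneg σ), sub_zero, one_div, mul_comm (2 * π),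
    Real.sqrt_mul (sq_nonneg σ), Real.sqrt_sq hσ]

theorem gaussian_clipped_abs_error (σ L U θ : ℝ) (hσ : 0 < σ)
    (hLθ : L ≤ θ) (hθU : θ ≤ U)
    (S : ℝ → ℝ) (hS : ∀ x, S x = max L (min U x))
    (f : ℝ → ℝ)
    (hf : ∀ x, f x = (1 / (σ * Real.sqrt (2 * Real.pi))) *
      Real.exp (-(x ^ 2) / (2 * σ ^ 2)))
    (F : ℝ → ℝ) (hF : ∀ x, F x = ∫ t in Set.Iic x, f t) :
    ∫ x, |S (θ + x) - θ| * f x =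
      (U - θ) * (1 - F (U - θ)) + (θ - L) * F (L - θ) +
        σ ^ 2 * (2 * f 0 - f (U - θ) - f (L - θ)) := by
  set v := (σ ^ 2).toNNReal
  have hv : (v : ℝ) = σ ^ 2 := Real.coe_toNNReal _ (sq_nonneg σ)
  obtain rfl : f = gaussianPDFReal 0 v :=
    funext fun x => (hf x).trans (gaussianPDFReal_zero_toNNReal_sq hσ.le x).symm
  have hG (x : ℝ) := by simpa only [sub_zero] using hasDerivAt_neg_mul_gaussianPDFReal 0 v x
  have hint := integrable_gaussianPDFReal 0 v
  have h_clip (x : ℝ) : S (θ + x) - θ = max (L - θ) (min (U - θ) x) := by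
    rw [hS, ← max_sub_sub_right, ← min_sub_sub_right, add_sub_cancel_left]
  have h_Ioi (p : ℝ) : ∫ x in Ioi p, gaussianPDFReal 0 v x = 1 - F p := by
    rw [← compl_Iic, setIntegral_compl measurableSet_Iic hint,
      integral_gaussianPDFReal_eq_one 0 (by positivity), hF]
  simp only [h_clip]
  rw [integral_abs_max_min_mul hint hG (by linarith) (by linarith), h_Ioi, ← hF, hv]
  ring
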